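/- Pointwise approximation estimate: let a be an H^1_b L^∞-atom supported in I(x0,r), let M ≥ 100 and y0 = x0 + Mr, set g = χ_{I(y0,r)} and h = −a / ((C̃_Γ)*(g)(x0)). Then for a.e. x ∈ ℝ, |a(x) − Π_b(g,h)(x)| ≤ C (Mr)^{-1} (χ_{I(x0,r)}(x) + χ_{I(y0,r)}(x)), with C depending only on ‖A'‖_∞; moreover ∫_ℝ (a(x) − Π_b(g,h)(x)) b(x) dx = 0, ‖g‖_{L^2(ℝ)} ≈ r^{1/2}, and ‖h‖_{L^2(ℝ)} ≤ C M r^{-1/2}. -/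

import Mathlib

open MeasureTheory Filter Set
open scoped ENNReal Topology NNReal

noncomputable section

/-- The accretive function `b(x) = 1 + i A'(x)`. -/
def bFun (A' : ℝ → ℝ) : ℝ → ℂ := fun x => 1 + Complex.I * (A' x : ℂ)

/-- The kernel of the Cauchy integral `C_Γ` associated with the Lipschitz curve
`Γ = {x + iA(x) : x ∈ ℝ}`. -/
def cauchyKer (A A' : ℝ → ℝ) (x y : ℝ) : ℂ :=
  ((Real.pi : ℂ) * Complex.I)⁻¹ *
    ((1 + Complex.I * (A' y : ℂ)) /
      ((y : ℂ) - (x : ℂ) + Complex.I * ((A y : ℂ) - (A x : ℂ))))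

/-- The kernel of the related Cauchy operator `C̃_Γ`. -/
def relKer (A : ℝ → ℝ) (x y : ℝ) : ℂ :=
  ((Real.pi : ℂ) * Complex.I)⁻¹ *
    (1 / ((y : ℂ) - (x : ℂ) + Complex.I * ((A y : ℂ) - (A x : ℂ))))

/-- `IsPV K f x z` : `z` is the principal value `p.v. ∫ K(x,y) f(y) dy`. -/
def IsPV (K : ℝ → ℝ → ℂ) (f : ℝ → ℂ) (x : ℝ) (z : ℂ) : Prop :=
  Tendsto (fun ε : ℝ => ∫ y in {y : ℝ | ε < |y - x|}, K x y * f y)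
    (𝓝[>] (0 : ℝ)) (𝓝 z)

/-- `T` is (the `L^p`-extension of) the principal value singular integral operator with
kernel `K`: for every `f ∈ L^p(ℝ)`, `1 < p < ∞`, at a.e. `x` the value `T f x` is the
principal value of `∫ K(x,y) f(y) dy`. -/
def IsPVOp (K : ℝ → ℝ → ℂ) (T : (ℝ → ℂ) → ℝ → ℂ) : Prop :=
  ∀ p : ℝ≥0∞, 1 < p → p < ⊤ → ∀ f : ℝ → ℂ, MemLp f p volume →
    ∀ᵐ x ∂volume, IsPV K f x (T f x)

/-- `T` is bounded on `L^p(ℝ)` with constant `C`. -/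
def BddOnLp (p : ℝ≥0∞) (T : (ℝ → ℂ) → ℝ → ℂ) (C : ℝ) : Prop :=
  ∀ f : ℝ → ℂ, MemLp f p volume →
    MemLp (T f) p volume ∧
      eLpNorm (T f) p volume ≤ ENNReal.ofReal C * eLpNorm f p volume

/-- `T` is a compact operator on `L^p(ℝ)`: every `L^p`-bounded sequence has a subsequence
whose image under `T` is Cauchy in the `L^p` (semi)metric; equivalently, `T` maps bounded
sets to precompact (totally bounded) sets. -/
def CompactOnLp (p : ℝ≥0∞) (T : (ℝ → ℂ) → ℝ → ℂ) : Prop :=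
  ∀ (f : ℕ → ℝ → ℂ) (C : ℝ≥0∞), (∀ n, MemLp (f n) p volume) →
    (∀ n, eLpNorm (f n) p volume ≤ C) →
    ∃ φ : ℕ → ℕ, StrictMono φ ∧
      ∀ ε : ℝ≥0∞, 0 < ε → ∃ N : ℕ, ∀ m ≥ N, ∀ n ≥ N,
        eLpNorm (fun x => T (f (φ m)) x - T (f (φ n)) x) p volume < ε

/-- The bilinear `L²`-pairing `⟨u, v⟩ = ∫ u v`. -/
def pairing (u v : ℝ → ℂ) : ℂ := ∫ x, u x * v x

/-- `S` is the adjoint of `T` with respect to the bilinear pairing `⟨u,v⟩ = ∫ u v`. -/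
def IsBilinAdjoint (T S : (ℝ → ℂ) → ℝ → ℂ) : Prop :=
  ∀ f g : ℝ → ℂ, MemLp f 2 volume → MemLp g 2 volume →
    pairing (T f) g = pairing f (S g)

/-- The bilinear form `Π_b(g,h) = b⁻¹ (g • T h − h • T* g)`. -/
def PiB (b : ℝ → ℂ) (T Tstar : (ℝ → ℂ) → ℝ → ℂ) (g h : ℝ → ℂ) : ℝ → ℂ :=
  fun x => (b x)⁻¹ * (g x * T h x - h x * Tstar g x)

/-- The commutator `[a, T] f = a • T f − T (a f)`. -/
def commutatorFn (a : ℝ → ℂ) (T : (ℝ → ℂ) → ℝ → ℂ) (f : ℝ → ℂ) : ℝ → ℂ :=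
  fun x => a x * T f x - T (fun y => a y * f y) x

/-- The mean oscillation of `f` over the interval `(a, c)`. -/
def meanOsc (f : ℝ → ℂ) (a c : ℝ) : ℝ :=
  (c - a)⁻¹ * ∫ x in a..c, ‖f x - (c - a)⁻¹ • ∫ y in a..c, f y‖

/-- The set of all mean oscillations of `f` over bounded intervals. -/
def bmoSet (f : ℝ → ℂ) : Set ℝ := {t | ∃ a c : ℝ, a < c ∧ t = meanOsc f a c}

/-- `f ∈ BMO(ℝ)`. -/
def MemBMO (f : ℝ → ℂ) : Prop :=
  LocallyIntegrable f volume ∧ BddAbove (bmoSet f)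

/-- The `BMO` seminorm of `f`. -/
def bmoNorm (f : ℝ → ℂ) : ℝ := sSup (bmoSet f)

/-- `f ∈ VMO(ℝ)`: `f ∈ BMO(ℝ)` and the mean oscillations vanish uniformly over small
intervals, over large intervals, and over intervals far from the origin. -/
def MemVMO (f : ℝ → ℂ) : Prop :=
  MemBMO f ∧
    (∀ ε : ℝ, 0 < ε → ∃ δ : ℝ, 0 < δ ∧
      ∀ a c : ℝ, a < c → c - a < δ → meanOsc f a c < ε) ∧
    (∀ ε : ℝ, 0 < ε → ∃ R : ℝ, 0 < R ∧
      ∀ a c : ℝ, a < c → R < c - a → meanOsc f a c < ε) ∧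
    (∀ ε : ℝ, 0 < ε → ∃ R : ℝ, 0 < R ∧
      ∀ a c : ℝ, a < c → (c ≤ -R ∨ R ≤ a) → meanOsc f a c < ε)

/-- `𝔄 ∈ BMO_b(ℝ)` iff `𝔄 / b ∈ BMO(ℝ)`. -/
def MemBMOb (b f : ℝ → ℂ) : Prop := MemBMO (fun x => f x / b x)

/-- `‖𝔄‖_{BMO_b} := ‖𝔄 / b‖_{BMO}`. -/
def bmobNorm (b f : ℝ → ℂ) : ℝ := bmoNorm (fun x => f x / b x)

/-- `𝔄 ∈ VMO_b(ℝ)` iff `𝔄 / b ∈ VMO(ℝ)`. -/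
def MemVMOb (b f : ℝ → ℂ) : Prop := MemVMO (fun x => f x / b x)

/-- An `H¹_b(ℝ)` `L^∞`-atom: supported in an interval `I = I(x0, r)`, with
`‖a‖_∞ ≤ 1/|I|` and the cancellation `∫ a b = 0`. Taking `b ≡ 1` gives classical
`H¹(ℝ)` `L^∞`-atoms. -/
def IsAtomB (b a : ℝ → ℂ) : Prop :=
  ∃ x0 r : ℝ, 0 < r ∧ (∀ x, x ∉ Metric.ball x0 r → a x = 0) ∧
    (∀ x, ‖a x‖ ≤ (2 * r)⁻¹) ∧
    Integrable (fun x => a x * b x) volume ∧ (∫ x, a x * b x) = 0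

/-- The `ℓ¹`-sums of coefficients of atomic decompositions of `f` into `H¹_b` atoms. -/
def h1bReps (b f : ℝ → ℂ) : Set ℝ :=
  {t | ∃ (lam : ℕ → ℂ) (a : ℕ → ℝ → ℂ),
        (∀ j, IsAtomB b (a j)) ∧ Summable (fun j => ‖lam j‖) ∧
        (∀ᵐ x ∂volume, HasSum (fun j => lam j * a j x) (f x)) ∧
        t = ∑' j, ‖lam j‖}

/-- `f ∈ H¹_b(ℝ)`: `f` is integrable and admits an atomic decomposition. -/
def MemH1b (b f : ℝ → ℂ) : Prop := Integrable f volume ∧ (h1bReps b f).Nonempty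

/-- The atomic `H¹_b(ℝ)` norm (with value `⊤` when `f ∉ H¹_b(ℝ)`). -/
def h1bNorm (b f : ℝ → ℂ) : ℝ≥0∞ := ⨅ t ∈ h1bReps b f, ENNReal.ofReal t

end

/-! Put `W = b h = -a b / κ`, which is supported in `I(x₀,r)` with `∫ W = 0`, and
`G = C̃_Γ χ_{I(y₀,r)}`. Since `C_Γ h = C̃_Γ W` and `C_Γ* g = -b C̃_Γ g`, we get
`b Π_b(g,h) = g C̃_Γ W + W G`, and as the two intervals are `(M-2)r` apart, both principal
values are absolutely convergent integrals. On `I(x₀,r)` the choice `κ = -G(x₀)` gives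
`a - Π_b(g,h) = a (G(x) - G(x₀)) / κ`; on `I(y₀,r)` the cancellation of `W` lets `C̃_Γ W` be
computed with the kernel increment `K(x,y) - K(x,x₀)`. Both increments are `O(1/(M² r))` by
the Lipschitz bound on the kernel, while `|κ| ≳ 1/M` because `Re (z(y) - z(x₀))⁻¹ ≳ 1/(Mr)` on
`I(y₀,r)`. Finally `∫ (a - Π_b(g,h)) b = 0`, as `∫ a b = 0` and the two cross terms cancel by
Fubini and the antisymmetry of the kernel. -/

open Metric

open Complex in
/-- The chord `z(y) - z(x)` of the curve `z(t) = t + i A(t)`. -/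
def curveChord (A : ℝ → ℝ) (x y : ℝ) : ℂ := ((y : ℂ) - x) + I * ((A y : ℂ) - A x)

section Kernel

variable {A : ℝ → ℝ} {L : ℝ≥0}

open Complex

lemma relKer_eq_inv_curveChord (x y : ℝ) :
    relKer A x y = ((Real.pi : ℂ) * I)⁻¹ * (curveChord A x y)⁻¹ := by
  simp [relKer, curveChord]

lemma curveChord_swap (x y : ℝ) : curveChord A y x = -curveChord A x y := by
  simp only [curveChord]; ring

lemma curveChord_sub_curveChord (x x' y : ℝ) :
    curveChord A x y - curveChord A x' y = curveChord A x x' := by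
  simp only [curveChord]; ring

lemma abs_sub_le_norm_curveChord (x y : ℝ) : |y - x| ≤ ‖curveChord A x y‖ := by
  simpa [curveChord] using abs_re_le_norm (curveChord A x y)

lemma norm_curveChord_le (hA : LipschitzWith L A) (x y : ℝ) :
    ‖curveChord A x y‖ ≤ (1 + L) * |y - x| := by
  have hAxy : |A y - A x| ≤ L * |y - x| := by
    simpa [Real.dist_eq] using hA.dist_le_mul y x
  calc ‖curveChord A x y‖ ≤ ‖((y - x : ℝ) : ℂ)‖ + ‖I * ((A y - A x : ℝ) : ℂ)‖ := by
        simpa [curveChord] using norm_add_le ((y : ℂ) - x) (I * ((A y : ℂ) - A x))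
    _ ≤ (1 + L) * |y - x| := by
        rw [norm_mul, norm_I, one_mul, norm_real, norm_real, Real.norm_eq_abs, Real.norm_eq_abs]
        linarith

lemma continuous_curveChord (hA : Continuous A) :
    Continuous fun p : ℝ × ℝ => curveChord A p.1 p.2 := by
  unfold curveChord; fun_prop

/-- For `x < y` the chord points into the right half-plane with slope at most `L`. -/
lemma inv_le_re_inv_curveChord (hA : LipschitzWith L A) {x y : ℝ} (hxy : x < y) :
    ((1 + (L : ℝ) ^ 2) * (y - x))⁻¹ ≤ (curveChord A x y)⁻¹.re := by
  have hAxy : |A y - A x| ≤ L * (y - x) := by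
    simpa [Real.dist_eq, abs_of_pos (sub_pos.2 hxy)] using hA.dist_le_mul y x
  have hN : normSq (curveChord A x y) ≤ (1 + (L : ℝ) ^ 2) * (y - x) ^ 2 := by
    rw [normSq_apply]
    simp only [curveChord, add_re, sub_re, ofReal_re, mul_re, I_re, I_im, ofReal_im, sub_im,
      add_im, mul_im]
    nlinarith [sq_abs (A y - A x), abs_nonneg (A y - A x)]
  have hpos : 0 < y - x := sub_pos.2 hxy
  have hre : (curveChord A x y).re = y - x := by simp [curveChord]
  have hN0 : 0 < normSq (curveChord A x y) := by
    rw [normSq_pos]; rintro h; simp [h] at hre; linarith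
  calc ((1 + (L : ℝ) ^ 2) * (y - x))⁻¹ = (y - x) / ((1 + (L : ℝ) ^ 2) * (y - x) ^ 2) := by
        field_simp
    _ ≤ (curveChord A x y)⁻¹.re := by
        rw [inv_re, hre]; gcongr

lemma relKer_swap (x y : ℝ) : relKer A y x = -relKer A x y := by
  rw [relKer_eq_inv_curveChord, relKer_eq_inv_curveChord, curveChord_swap, inv_neg, mul_neg]

lemma norm_relKer_le {x y d : ℝ} (hd : 0 < d) (h : d ≤ |y - x|) :
    ‖relKer A x y‖ ≤ (Real.pi * d)⁻¹ := by
  rw [relKer_eq_inv_curveChord, norm_mul, norm_inv, norm_inv, norm_mul, norm_I, mul_one,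
    norm_real, Real.norm_of_nonneg Real.pi_pos.le, mul_inv]
  gcongr
  exact h.trans (abs_sub_le_norm_curveChord x y)

lemma norm_relKer_sub_relKer_le (hA : LipschitzWith L A) {x x' y d : ℝ} (hd : 0 < d)
    (hx : d ≤ |y - x|) (hx' : d ≤ |y - x'|) :
    ‖relKer A x y - relKer A x' y‖ ≤ (1 + L) * |x - x'| / (Real.pi * d ^ 2) := by
  have hz : d ≤ ‖curveChord A x y‖ := hx.trans (abs_sub_le_norm_curveChord x y)
  have hz' : d ≤ ‖curveChord A x' y‖ := hx'.trans (abs_sub_le_norm_curveChord x' y)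
  have hne : curveChord A x y ≠ 0 := norm_pos_iff.1 (hd.trans_le hz)
  have hne' : curveChord A x' y ≠ 0 := norm_pos_iff.1 (hd.trans_le hz')
  have hdiff : (curveChord A x y)⁻¹ - (curveChord A x' y)⁻¹
      = curveChord A x' x / (curveChord A x y * curveChord A x' y) := by
    rw [inv_sub_inv hne hne', curveChord_sub_curveChord]
  have hnum : ‖curveChord A x' x‖ ≤ (1 + L) * |x - x'| := norm_curveChord_le hA x' x
  rw [relKer_eq_inv_curveChord, relKer_eq_inv_curveChord, ← mul_sub, hdiff, norm_mul, norm_inv,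
    norm_mul, norm_I, mul_one, norm_real, Real.norm_of_nonneg Real.pi_pos.le, norm_div, norm_mul,
    show (1 + L) * |x - x'| / (Real.pi * d ^ 2) = Real.pi⁻¹ * ((1 + L) * |x - x'| / (d * d)) by
      field_simp]
  gcongr

end Kernel

section SeparatedIntegrals

variable {A : ℝ → ℝ} {L : ℝ≥0} {s t : Set ℝ} {x x' d : ℝ}

open Complex

lemma measurable_relKer (hA : Continuous A) : Measurable (Function.uncurry (relKer A)) := by
  have h : Function.uncurry (relKer A)
      = fun p : ℝ × ℝ => ((Real.pi : ℂ) * I)⁻¹ * (curveChord A p.1 p.2)⁻¹ := by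
    funext p; exact relKer_eq_inv_curveChord p.1 p.2
  rw [h]
  exact measurable_const.mul (continuous_curveChord hA).measurable.inv

lemma integrableOn_inv_curveChord (hA : Continuous A) (hs : MeasurableSet s)
    (hsfin : volume s ≠ ⊤) (hd : 0 < d) (hsep : ∀ y ∈ s, d ≤ |y - x|) :
    IntegrableOn (fun y => (curveChord A x y)⁻¹) s := by
  have hmeas : Measurable fun y => curveChord A x y :=
    ((continuous_curveChord hA).comp (Continuous.prodMk_right x)).measurable
  refine Measure.integrableOn_of_bounded (M := d⁻¹) hsfin hmeas.inv.aestronglyMeasurable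
    (ae_restrict_of_forall_mem hs fun y hy => ?_)
  rw [norm_inv]
  exact inv_anti₀ hd ((hsep y hy).trans (abs_sub_le_norm_curveChord x y))

lemma integrableOn_relKer (hA : Continuous A) (hs : MeasurableSet s) (hsfin : volume s ≠ ⊤)
    (hd : 0 < d) (hsep : ∀ y ∈ s, d ≤ |y - x|) : IntegrableOn (relKer A x) s := by
  have h : relKer A x = fun y => ((Real.pi : ℂ) * I)⁻¹ * (curveChord A x y)⁻¹ := by
    funext y; exact relKer_eq_inv_curveChord x y
  rw [h]
  exact (integrableOn_inv_curveChord hA hs hsfin hd hsep).const_mul _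

/-- There is no cancellation: `Re (z(y) - z(x))⁻¹ > 0` on the whole ball. -/
lemma le_norm_setIntegral_relKer_ball (hA : LipschitzWith L A) {y0 r : ℝ} (hr : 0 < r)
    (hxy : x + 2 * r ≤ y0) :
    2 * r / (Real.pi * ((1 + (L : ℝ) ^ 2) * (y0 + r - x))) ≤
      ‖∫ y in ball y0 r, relKer A x y‖ := by
  set B := ball y0 r
  have hint : IntegrableOn (fun y => (curveChord A x y)⁻¹) B :=
    integrableOn_inv_curveChord hA.continuous measurableSet_ball measure_ball_lt_top.ne hr
      fun y hy => by
        have := (abs_lt.1 (Real.dist_eq y y0 ▸ mem_ball.1 hy)).1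
        rw [abs_of_pos (by linarith)]; linarith
  have hint_re : (∫ y in B, (curveChord A x y)⁻¹).re = ∫ y in B, (curveChord A x y)⁻¹.re := by
    simpa using (integral_re hint).symm
  have hre : ∀ y ∈ B, ((1 + (L : ℝ) ^ 2) * (y0 + r - x))⁻¹ ≤ (curveChord A x y)⁻¹.re := by
    intro y hy
    have hy' := abs_lt.1 (Real.dist_eq y y0 ▸ mem_ball.1 hy)
    refine le_trans ?_ (inv_le_re_inv_curveChord hA (by linarith))
    gcongr
    · nlinarith
    · linarith
  have hmono :
      2 * r * ((1 + (L : ℝ) ^ 2) * (y0 + r - x))⁻¹ ≤ ∫ y in B, (curveChord A x y)⁻¹.re := by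
    have := setIntegral_mono_on (integrableOn_const measure_ball_lt_top.ne) hint.re
      measurableSet_ball hre
    rwa [setIntegral_const, Real.volume_real_ball hr.le, smul_eq_mul] at this
  calc 2 * r / (Real.pi * ((1 + (L : ℝ) ^ 2) * (y0 + r - x)))
      = Real.pi⁻¹ * (2 * r * ((1 + (L : ℝ) ^ 2) * (y0 + r - x))⁻¹) := by
        rw [div_eq_mul_inv, mul_inv]; ring
    _ ≤ Real.pi⁻¹ * (∫ y in B, (curveChord A x y)⁻¹).re := by
        rw [hint_re]; gcongr
    _ ≤ Real.pi⁻¹ * ‖∫ y in B, (curveChord A x y)⁻¹‖ := by gcongr; exact re_le_norm _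
    _ = ‖∫ y in B, relKer A x y‖ := by
        simp_rw [relKer_eq_inv_curveChord, integral_const_mul, norm_mul, norm_inv, norm_mul,
          norm_I, mul_one, norm_real, Real.norm_of_nonneg Real.pi_pos.le]

lemma norm_setIntegral_relKer_sub_le (hA : LipschitzWith L A) (hs : MeasurableSet s)
    (hsfin : volume s ≠ ⊤) (hd : 0 < d) (hx : ∀ y ∈ s, d ≤ |y - x|)
    (hx' : ∀ y ∈ s, d ≤ |y - x'|) :
    ‖(∫ y in s, relKer A x y) - ∫ y in s, relKer A x' y‖ ≤
      (1 + L) * |x - x'| / (Real.pi * d ^ 2) * volume.real s := by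
  rw [← integral_sub (integrableOn_relKer hA.continuous hs hsfin hd hx)
    (integrableOn_relKer hA.continuous hs hsfin hd hx')]
  exact norm_setIntegral_le_of_norm_le_const hsfin.lt_top fun y hy =>
    norm_relKer_sub_relKer_le hA hd (hx y hy) (hx' y hy)

/-- The cancellation `∫ W = 0` lets the kernel be replaced by its increment `K(x,y) - K(x,c)`. -/
lemma norm_setIntegral_relKer_mul_le (hA : LipschitzWith L A) (hs : MeasurableSet s)
    (hsfin : volume s ≠ ⊤) (hd : 0 < d) (hsep : ∀ y ∈ s, d ≤ |y - x|) {c ρ B : ℝ}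
    (hc : d ≤ |c - x|) (hρ : ∀ y ∈ s, |y - c| ≤ ρ) {W : ℝ → ℂ} (hW : IntegrableOn W s)
    (hWB : ∀ y ∈ s, ‖W y‖ ≤ B) (hW0 : ∫ y in s, W y = 0) :
    ‖∫ y in s, relKer A x y * W y‖ ≤ (1 + L) * ρ / (Real.pi * d ^ 2) * B * volume.real s := by
  have hKW : IntegrableOn (fun y => relKer A x y * W y) s :=
    hW.bdd_mul (integrableOn_relKer hA.continuous hs hsfin hd hsep).aestronglyMeasurable
      (ae_restrict_of_forall_mem hs fun y hy => norm_relKer_le hd (hsep y hy))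
  have hincr :
      ∫ y in s, relKer A x y * W y = ∫ y in s, (relKer A x y - relKer A x c) * W y := by
    simp_rw [sub_mul]
    rw [integral_sub hKW (hW.const_mul _), integral_const_mul, hW0, mul_zero, sub_zero]
  rw [hincr]
  refine norm_setIntegral_le_of_norm_le_const hsfin.lt_top fun y hy => ?_
  rw [norm_mul, relKer_swap y x, relKer_swap c x, neg_sub_neg, norm_sub_rev]
  have hsep' : d ≤ |x - y| := abs_sub_comm y x ▸ hsep y hy
  have hc' : d ≤ |x - c| := abs_sub_comm c x ▸ hc
  have hρ0 : 0 ≤ ρ := (abs_nonneg _).trans (hρ y hy)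
  have hK : ‖relKer A y x - relKer A c x‖ ≤ (1 + L) * ρ / (Real.pi * d ^ 2) :=
    (norm_relKer_sub_relKer_le hA hd hsep' hc').trans (by gcongr; exact hρ y hy)
  exact mul_le_mul hK (hWB y hy) (norm_nonneg _) (by positivity)

lemma integrable_relKer_mul_prod (hA : Continuous A) (hs : MeasurableSet s)
    (ht : MeasurableSet t) (htfin : volume t ≠ ⊤) (hd : 0 < d)
    (hsep : ∀ x ∈ t, ∀ y ∈ s, d ≤ |y - x|) {W : ℝ → ℂ} (hW : IntegrableOn W s) :
    Integrable (Function.uncurry fun x y => relKer A x y * W y)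
      ((volume.restrict t).prod (volume.restrict s)) := by
  have := isFiniteMeasure_restrict.2 htfin
  refine (hW.comp_snd (volume.restrict t)).bdd_mul
    (measurable_relKer hA).aestronglyMeasurable (c := (Real.pi * d)⁻¹) ?_
  rw [Measure.prod_restrict, ← Measure.volume_eq_prod]
  exact ae_restrict_of_forall_mem (ht.prod hs) fun p hp =>
    norm_relKer_le hd (hsep _ hp.1 _ hp.2)

/-- The antisymmetry `K(x,y) = -K(y,x)` and Fubini make the two cross terms cancel. -/
lemma integral_indicator_add_mul_eq_zero (hA : Continuous A) (hs : MeasurableSet s)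
    (ht : MeasurableSet t) (htfin : volume t ≠ ⊤) (hd : 0 < d)
    (hsep : ∀ x ∈ t, ∀ y ∈ s, d ≤ |y - x|) {W : ℝ → ℂ} (hW : IntegrableOn W s)
    (hW0 : ∀ y ∉ s, W y = 0) :
    Integrable (fun x => t.indicator (fun x => ∫ y in s, relKer A x y * W y) x +
        W x * ∫ y in t, relKer A x y) ∧
      ∫ x, (t.indicator (fun x => ∫ y in s, relKer A x y * W y) x +
        W x * ∫ y in t, relKer A x y) = 0 := by
  have hprod := integrable_relKer_mul_prod hA hs ht htfin hd hsep hW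
  have hcross : ∀ y, ∫ x in t, relKer A x y * W y = -(W y * ∫ x in t, relKer A y x) := by
    intro y
    simp_rw [integral_mul_const, relKer_swap y, integral_neg]
    ring
  have hsum : (fun x => t.indicator (fun x => ∫ y in s, relKer A x y * W y) x +
        W x * ∫ y in t, relKer A x y)
      = t.indicator (fun x => ∫ y in s, relKer A x y * W y) +
        s.indicator fun y => W y * ∫ x in t, relKer A y x := by
    funext x; by_cases hx : x ∈ s <;> simp [hx, hW0]
  have hF : IntegrableOn (fun x => ∫ y in s, relKer A x y * W y) t := hprod.integral_prod_left
  have hWG : IntegrableOn (fun y => W y * ∫ x in t, relKer A y x) s :=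
    hprod.integral_prod_right.neg.congr (ae_of_all _ fun y => by simp [hcross])
  rw [hsum]
  refine ⟨(hF.integrable_indicator ht).add (hWG.integrable_indicator hs), ?_⟩
  rw [Pi.add_def, integral_add (hF.integrable_indicator ht) (hWG.integrable_indicator hs),
    integral_indicator ht, integral_indicator hs, integral_integral_swap hprod, ← integral_add]
  · simp [hcross]
  · exact hprod.integral_prod_right
  · exact hWG

end SeparatedIntegrals

lemma isPV_of_eq_zero_off {K : ℝ → ℝ → ℂ} {f : ℝ → ℂ} {s : Set ℝ} {x d : ℝ}
    (hs : MeasurableSet s) (hd : 0 < d) (hsep : ∀ y ∈ s, d ≤ |y - x|) (hf : ∀ y ∉ s, f y = 0) :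
    IsPV K f x (∫ y in s, K x y * f y) := by
  refine tendsto_const_nhds.congr' ?_
  filter_upwards [Ioo_mem_nhdsGT hd] with ε hε
  have hind : (fun y => K x y * f y) = s.indicator fun y => K x y * f y := by
    funext y; by_cases hy : y ∈ s <;> simp [hy, hf]
  have hcut := setIntegral_indicator (μ := volume) (s := {y | ε < |y - x|})
    (f := fun y => K x y * f y) hs
  have hsub : s ⊆ {y : ℝ | ε < |y - x|} := fun y hy => hε.2.trans_le (hsep y hy)
  rw [Set.inter_eq_right.2 hsub] at hcut
  rw [← hcut, ← hind]

section Accretive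

variable {A' : ℝ → ℝ}

lemma one_le_norm_bFun (x : ℝ) : 1 ≤ ‖bFun A' x‖ := by
  simpa [bFun] using Complex.abs_re_le_norm (bFun A' x)

lemma bFun_ne_zero (x : ℝ) : bFun A' x ≠ 0 :=
  norm_pos_iff.1 (one_pos.trans_le (one_le_norm_bFun x))

lemma norm_bFun_le {L : ℝ} (hA' : ∀ x, |A' x| ≤ L) (x : ℝ) : ‖bFun A' x‖ ≤ 1 + L := by
  refine (norm_add_le _ _).trans ?_
  rw [norm_one, norm_mul, Complex.norm_I, one_mul, Complex.norm_real, Real.norm_eq_abs]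
  linarith [hA' x]

end Accretive

lemma piB_mul_eq {b g h : ℝ → ℂ} {T Tstar Ct : (ℝ → ℂ) → ℝ → ℂ} {x : ℝ} (hb : b x ≠ 0)
    (hT : T h x = Ct (fun y => b y * h y) x) (hTstar : Tstar g x = -b x * Ct g x) :
    PiB b T Tstar g h x * b x = g x * Ct (fun y => b y * h y) x + b x * h x * Ct g x := by
  simp only [PiB, hT, hTstar]
  field_simp
  ring

lemma ae_piB_mul_bFun_eq {A A' : ℝ → ℝ} {CΓ CΓstar Ct : (ℝ → ℂ) → ℝ → ℂ}
    (hCt : IsPVOp (relKer A) Ct)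
    (hrel : ∀ f : ℝ → ℂ, CΓ f =ᵐ[volume] Ct (fun y => bFun A' y * f y))
    (hadj : ∀ g : ℝ → ℂ, CΓstar g =ᵐ[volume] fun x => -(bFun A' x) * Ct g x)
    {s t : Set ℝ} {d : ℝ} (hs : MeasurableSet s) (ht : MeasurableSet t) (htfin : volume t ≠ ⊤)
    (hd : 0 < d) (hsep : ∀ x ∈ s, ∀ y ∈ t, d ≤ |y - x|) {h : ℝ → ℂ} (hh : ∀ y ∉ s, h y = 0)
    (hW : MemLp (fun y => bFun A' y * h y) 2 volume) :
    ∀ᵐ x ∂volume, PiB (bFun A') CΓ CΓstar (t.indicator fun _ => 1) h x * bFun A' x =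
      t.indicator (fun x => ∫ y in s, relKer A x y * (bFun A' y * h y)) x +
        bFun A' x * h x * ∫ y in t, relKer A x y := by
  have h2 : (1 : ℝ≥0∞) < 2 := by norm_num
  have hg : MemLp (t.indicator fun _ => (1 : ℂ)) 2 volume :=
    memLp_indicator_const 2 ht (1 : ℂ) (Or.inr htfin)
  filter_upwards [hCt 2 h2 ENNReal.ofNat_lt_top _ hg, hCt 2 h2 ENNReal.ofNat_lt_top _ hW,
    hrel h, hadj (t.indicator fun _ => 1)] with x hCtg hCtW hrelx hadjx
  rw [piB_mul_eq (bFun_ne_zero x) hrelx hadjx]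
  by_cases hxs : x ∈ s
  · have hxt : x ∉ t := fun hxt => by
      have := hsep x hxs x hxt
      rw [sub_self, abs_zero] at this
      linarith
    have hG : Ct (t.indicator fun _ => 1) x = ∫ y in t, relKer A x y := by
      have hpv := isPV_of_eq_zero_off (K := relKer A) (f := t.indicator fun _ => (1 : ℂ)) ht hd
        (hsep x hxs) fun y hy => Set.indicator_of_notMem hy _
      rw [setIntegral_congr_fun ht (g := relKer A x) fun y hy => by simp [hy]] at hpv
      exact tendsto_nhds_unique hCtg hpv
    simp [hxt, hG]
  · rw [hh x hxs, mul_zero, zero_mul, add_zero]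
    by_cases hxt : x ∈ t
    · have hF : Ct (fun y => bFun A' y * h y) x = ∫ y in s, relKer A x y * (bFun A' y * h y) :=
        tendsto_nhds_unique hCtW (isPV_of_eq_zero_off hs hd
          (fun y hy => abs_sub_comm x y ▸ hsep y hy x hxt) fun y hy => by simp [hh y hy])
      simp [hxt, hF]
    · simp [hxt]

lemma eLpNorm_indicator_const_ball {E : Type*} [NormedAddCommGroup E] (x : ℝ) {r : ℝ}
    (hr : 0 ≤ r) (c : E) :
    eLpNorm ((ball x r).indicator fun _ => c) 2 volume = ENNReal.ofReal (‖c‖ * √(2 * r)) := by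
  rw [eLpNorm_indicator_const measurableSet_ball two_ne_zero ENNReal.ofNat_ne_top,
    Real.volume_ball, ENNReal.toReal_ofNat, ENNReal.ofReal_rpow_of_nonneg (by positivity)
    (by norm_num), ← Real.sqrt_eq_rpow, ← ofReal_norm, ENNReal.ofReal_mul (norm_nonneg c)]

/-- An `H¹_b` `L^∞`-atom supported in `I(x₀, r)`. -/
structure IsAtomOn (b a : ℝ → ℂ) (x0 r : ℝ) : Prop where
  eq_zero_of_notMem : ∀ x, x ∉ ball x0 r → a x = 0
  norm_le : ∀ x, ‖a x‖ ≤ (2 * r)⁻¹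
  integrable_mul : Integrable (fun x => a x * b x) volume
  integral_mul_eq_zero : ∫ x, a x * b x = 0

section Atom

variable {A A' : ℝ → ℝ} {L : ℝ≥0} {a : ℝ → ℂ} {x0 r M : ℝ} {κ : ℂ}

lemma le_abs_sub_of_mem_ball {x y : ℝ} (hx : x ∈ ball x0 r) (hy : y ∈ ball (x0 + M * r) r) :
    (M - 2) * r ≤ |y - x| := by
  rw [mem_ball, Real.dist_eq, abs_lt] at hx hy
  exact le_abs.2 (Or.inl (by linarith))

lemma mul_div_sq_sub_two_le (hr : 0 < r) (hM : 7 ≤ M) :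
    M * r / ((M - 2) * r) ^ 2 ≤ 2 * (M * r)⁻¹ := by
  have hM2 : 0 < M - 2 := by linarith
  rw [div_le_iff₀ (by positivity), ← div_eq_mul_inv, div_mul_eq_mul_div,
    le_div_iff₀ (by positivity)]
  have : M ^ 2 ≤ 2 * (M - 2) ^ 2 := by nlinarith
  calc M * r * (M * r) = M ^ 2 * r ^ 2 := by ring
    _ ≤ 2 * (M - 2) ^ 2 * r ^ 2 := by gcongr
    _ = 2 * ((M - 2) * r) ^ 2 := by ring

lemma inv_norm_setIntegral_relKer_ball_le (hA : LipschitzWith L A) (hr : 0 < r) (hM : 2 ≤ M) :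
    0 < ‖∫ y in ball (x0 + M * r) r, relKer A x0 y‖ ∧
      ‖∫ y in ball (x0 + M * r) r, relKer A x0 y‖⁻¹ ≤ Real.pi * (1 + L ^ 2) * M := by
  have hlow := le_norm_setIntegral_relKer_ball hA (x := x0) (y0 := x0 + M * r) hr (by nlinarith)
  have hpos : 0 < 2 * r / (Real.pi * ((1 + (L : ℝ) ^ 2) * (x0 + M * r + r - x0))) := by
    have : 0 < x0 + M * r + r - x0 := by nlinarith
    positivity
  refine ⟨hpos.trans_le hlow, (inv_anti₀ hpos hlow).trans ?_⟩
  rw [inv_div, div_le_iff₀ (by positivity)]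
  have : 0 ≤ Real.pi * (1 + (L : ℝ) ^ 2) * r * (M - 1) := by
    have : 0 ≤ M - 1 := by linarith
    positivity
  nlinarith

/-- As `κ = -G(x₀)` for `G = C̃_Γ χ_{I(y₀,r)}`, the left side is `‖α (G(x) - G(x₀)) / κ‖`. -/
lemma norm_sub_neg_div_mul_setIntegral_le (hA : LipschitzWith L A) (hr : 0 < r) (hM : 7 ≤ M)
    (hκ : κ = -∫ y in ball (x0 + M * r) r, relKer A x0 y) {x : ℝ} (hx : x ∈ ball x0 r)
    {α : ℂ} (hα : ‖α‖ ≤ (2 * r)⁻¹) :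
    ‖α - -α / κ * ∫ y in ball (x0 + M * r) r, relKer A x y‖ ≤
      2 * ((1 + L) * (1 + L ^ 2)) * (M * r)⁻¹ := by
  set I1 := ball (x0 + M * r) r
  obtain ⟨hGpos, hκinv⟩ :=
    inv_norm_setIntegral_relKer_ball_le (x0 := x0) (M := M) hA hr (by linarith)
  have hG0 : (∫ y in I1, relKer A x0 y) ≠ 0 := norm_pos_iff.1 hGpos
  rw [← norm_neg, ← hκ] at hκinv
  have hd : 0 < (M - 2) * r := mul_pos (by linarith) hr
  have hincr : ‖(∫ y in I1, relKer A x y) - ∫ y in I1, relKer A x0 y‖ ≤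
      (1 + L) * r / (Real.pi * ((M - 2) * r) ^ 2) * (2 * r) := by
    refine (norm_setIntegral_relKer_sub_le hA measurableSet_ball measure_ball_lt_top.ne hd
      (fun y hy => le_abs_sub_of_mem_ball hx hy)
      (fun y hy => le_abs_sub_of_mem_ball (mem_ball_self hr) hy)).trans ?_
    rw [Real.volume_real_ball hr.le]
    have hxr : |x - x0| ≤ r := (mem_ball.1 hx).le
    gcongr
  have heq : α - -α / κ * ∫ y in I1, relKer A x y
      = α * ((∫ y in I1, relKer A x y) - ∫ y in I1, relKer A x0 y) * κ⁻¹ := by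
    rw [hκ]
    field_simp
    ring
  rw [heq, norm_mul, norm_mul, norm_inv]
  calc ‖α‖ * ‖(∫ y in I1, relKer A x y) - ∫ y in I1, relKer A x0 y‖ * ‖κ‖⁻¹
      ≤ (2 * r)⁻¹ * ((1 + L) * r / (Real.pi * ((M - 2) * r) ^ 2) * (2 * r)) *
          (Real.pi * (1 + L ^ 2) * M) := by gcongr
    _ = ((1 + L) * (1 + L ^ 2)) * (M * r / ((M - 2) * r) ^ 2) := by
        field_simp
    _ ≤ ((1 + L) * (1 + L ^ 2)) * (2 * (M * r)⁻¹) := by gcongr; exact mul_div_sq_sub_two_le hr hM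
    _ = 2 * ((1 + L) * (1 + L ^ 2)) * (M * r)⁻¹ := by ring

namespace IsAtomOn

variable {b : ℝ → ℂ} {K : ℝ}

lemma norm_neg_div_le (ha : IsAtomOn b a x0 r) (hκ : ‖κ‖⁻¹ ≤ K) (x : ℝ) :
    ‖-a x / κ‖ ≤ (2 * r)⁻¹ * K := by
  rw [norm_div, norm_neg, div_eq_mul_inv]
  exact mul_le_mul (ha.norm_le x) hκ (by positivity) ((norm_nonneg _).trans (ha.norm_le x))

lemma eLpNorm_neg_div_le (ha : IsAtomOn b a x0 r) (hr : 0 ≤ r) (hκ : ‖κ‖⁻¹ ≤ K) :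
    eLpNorm (fun x => -a x / κ) 2 volume ≤ ENNReal.ofReal ((2 * r)⁻¹ * K * √(2 * r)) := by
  have hc : 0 ≤ (2 * r)⁻¹ * K := (norm_nonneg _).trans (ha.norm_neg_div_le hκ x0)
  calc eLpNorm (fun x => -a x / κ) 2 volume
      ≤ eLpNorm ((ball x0 r).indicator fun _ => (2 * r)⁻¹ * K) 2 volume := by
        refine eLpNorm_mono_real fun x => ?_
        by_cases hx : x ∈ ball x0 r
        · simpa [hx] using ha.norm_neg_div_le hκ x
        · simp [hx, ha.eq_zero_of_notMem x hx]
    _ = _ := by rw [eLpNorm_indicator_const_ball x0 hr, Real.norm_of_nonneg hc]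

lemma integrable_mul_neg_div (ha : IsAtomOn b a x0 r) :
    Integrable (fun y => b y * (-a y / κ)) volume :=
  (ha.integrable_mul.const_mul (-κ⁻¹)).congr (ae_of_all _ fun y => by ring)

lemma setIntegral_mul_neg_div_eq_zero (ha : IsAtomOn b a x0 r) :
    ∫ y in ball x0 r, b y * (-a y / κ) = 0 := by
  rw [setIntegral_eq_integral_of_forall_compl_eq_zero fun y hy => by
      simp [ha.eq_zero_of_notMem y hy]]
  calc ∫ y, b y * (-a y / κ) = ∫ y, -κ⁻¹ * (a y * b y) :=
        integral_congr_ae (ae_of_all _ fun y => by ring)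
    _ = 0 := by rw [integral_const_mul, ha.integral_mul_eq_zero, mul_zero]

lemma memLp_mul_neg_div (ha : IsAtomOn b a x0 r) {B : ℝ} (hb : ∀ y, ‖b y‖ ≤ B)
    (hκ : ‖κ‖⁻¹ ≤ K) : MemLp (fun y => b y * (-a y / κ)) 2 volume := by
  refine (memLp_indicator_const 2 (measurableSet_ball (x := x0) (ε := r)) (B * ((2 * r)⁻¹ * K))
    (Or.inr measure_ball_lt_top.ne)).of_le ha.integrable_mul_neg_div.aestronglyMeasurable
    (ae_of_all _ fun y => ?_)
  by_cases hy : y ∈ ball x0 r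
  · rw [indicator_of_mem hy, norm_mul]
    have hB : 0 ≤ B := (norm_nonneg _).trans (hb y)
    refine (mul_le_mul (hb y) (ha.norm_neg_div_le hκ y) (norm_nonneg _) hB).trans (le_abs_self _)
  · simp [hy, ha.eq_zero_of_notMem y hy]

lemma norm_bFun_mul_neg_div_le (ha : IsAtomOn (bFun A') a x0 r) (hA' : ∀ x, |A' x| ≤ L)
    (hκ : ‖κ‖⁻¹ ≤ K) (y : ℝ) : ‖bFun A' y * (-a y / κ)‖ ≤ (1 + L) * ((2 * r)⁻¹ * K) := by
  rw [norm_mul]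
  exact mul_le_mul (norm_bFun_le hA' y) (ha.norm_neg_div_le hκ y) (norm_nonneg _)
    (by have := norm_bFun_le hA' y; linarith [norm_nonneg (bFun A' y)])

lemma norm_setIntegral_relKer_bFun_mul_le (ha : IsAtomOn (bFun A') a x0 r) (hA : LipschitzWith L A)
    (hA' : ∀ x, |A' x| ≤ L) (hr : 0 < r) (hM : 7 ≤ M)
    (hκ : ‖κ‖⁻¹ ≤ Real.pi * (1 + L ^ 2) * M) {x : ℝ} (hx : x ∈ ball (x0 + M * r) r) :
    ‖∫ y in ball x0 r, relKer A x y * (bFun A' y * (-a y / κ))‖ ≤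
      2 * ((1 + L) ^ 2 * (1 + L ^ 2)) * (M * r)⁻¹ := by
  have hd : 0 < (M - 2) * r := mul_pos (by linarith) hr
  refine (norm_setIntegral_relKer_mul_le hA measurableSet_ball measure_ball_lt_top.ne hd
    (fun y hy => abs_sub_comm x y ▸ le_abs_sub_of_mem_ball hy hx)
    (abs_sub_comm x x0 ▸ le_abs_sub_of_mem_ball (mem_ball_self hr) hx)
    (fun y hy => (mem_ball.1 hy).le) ha.integrable_mul_neg_div.integrableOn
    (fun y _ => ha.norm_bFun_mul_neg_div_le hA' hκ y) ha.setIntegral_mul_neg_div_eq_zero).trans ?_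
  rw [Real.volume_real_ball hr.le]
  calc (1 + L) * r / (Real.pi * ((M - 2) * r) ^ 2) *
        ((1 + L) * ((2 * r)⁻¹ * (Real.pi * (1 + L ^ 2) * M))) * (2 * r)
      = ((1 + L) ^ 2 * (1 + L ^ 2)) * (M * r / ((M - 2) * r) ^ 2) := by
        field_simp
    _ ≤ ((1 + L) ^ 2 * (1 + L ^ 2)) * (2 * (M * r)⁻¹) := by
        gcongr; exact mul_div_sq_sub_two_le hr hM
    _ = 2 * ((1 + L) ^ 2 * (1 + L ^ 2)) * (M * r)⁻¹ := by ring

variable {CΓ CΓstar Ct : (ℝ → ℂ) → ℝ → ℂ}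

lemma ae_norm_sub_piB_le (ha : IsAtomOn (bFun A') a x0 r) (hA : LipschitzWith L A)
    (hA' : ∀ x, |A' x| ≤ L) (hr : 0 < r) (hM : 7 ≤ M)
    (hκ : κ = -∫ y in ball (x0 + M * r) r, relKer A x0 y) (hCt : IsPVOp (relKer A) Ct)
    (hrel : ∀ f : ℝ → ℂ, CΓ f =ᵐ[volume] Ct (fun y => bFun A' y * f y))
    (hadj : ∀ g : ℝ → ℂ, CΓstar g =ᵐ[volume] fun x => -(bFun A' x) * Ct g x) :
    ∀ᵐ x ∂volume, ‖a x - PiB (bFun A') CΓ CΓstar ((ball (x0 + M * r) r).indicator fun _ => 1)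
        (fun x => -a x / κ) x‖ ≤ 4 * (1 + L) ^ 2 * (1 + L ^ 2) * (M * r)⁻¹ *
          ((ball x0 r).indicator (fun _ => (1 : ℝ)) x +
            (ball (x0 + M * r) r).indicator (fun _ => (1 : ℝ)) x) := by
  obtain ⟨-, hκinv⟩ := inv_norm_setIntegral_relKer_ball_le (x0 := x0) (M := M) hA hr (by linarith)
  rw [← norm_neg, ← hκ] at hκinv
  have hd : 0 < (M - 2) * r := mul_pos (by linarith) hr
  have hC : 0 ≤ (1 + (L : ℝ)) ^ 2 * (1 + L ^ 2) * (M * r)⁻¹ := by positivity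
  have hL : 1 + (L : ℝ) ≤ (1 + L) ^ 2 := by nlinarith [L.coe_nonneg]
  filter_upwards [ae_piB_mul_bFun_eq hCt hrel hadj measurableSet_ball measurableSet_ball
    measure_ball_lt_top.ne hd (fun x hx y hy => le_abs_sub_of_mem_ball hx hy)
    (fun y hy => by simp [ha.eq_zero_of_notMem y hy])
    (ha.memLp_mul_neg_div (norm_bFun_le hA') hκinv)] with x hx
  rw [← eq_mul_inv_iff_mul_eq₀ (bFun_ne_zero x)] at hx
  rw [hx]
  by_cases hx0 : x ∈ ball x0 r
  · have hx1 : x ∉ ball (x0 + M * r) r := fun hx1 => by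
      have := le_abs_sub_of_mem_ball hx0 hx1
      rw [sub_self, abs_zero] at this
      linarith
    have hnear := norm_sub_neg_div_mul_setIntegral_le hA hr hM hκ hx0 (ha.norm_le x)
    simp only [indicator_of_mem hx0, indicator_of_notMem hx1, add_zero, zero_add, mul_one]
    have hcancel : bFun A' x * (-a x / κ) * (∫ y in ball (x0 + M * r) r, relKer A x y) *
        (bFun A' x)⁻¹ = -a x / κ * ∫ y in ball (x0 + M * r) r, relKer A x y := by
      rw [mul_comm (bFun A' x), mul_right_comm _ (bFun A' x),
        mul_inv_cancel_right₀ (bFun_ne_zero x)]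
    rw [hcancel]
    refine hnear.trans ?_
    nlinarith
  · have hfar := ha.norm_setIntegral_relKer_bFun_mul_le hA hA' hr hM hκinv (x := x)
    simp only [ha.eq_zero_of_notMem x hx0, indicator_of_notMem hx0, zero_div, neg_zero, mul_zero,
      zero_mul, add_zero, zero_sub, norm_neg, zero_add]
    by_cases hx1 : x ∈ ball (x0 + M * r) r
    · rw [indicator_of_mem hx1, indicator_of_mem hx1, norm_mul, norm_inv]
      calc ‖∫ y in ball x0 r, relKer A x y * (bFun A' y * (-a y / κ))‖ * ‖bFun A' x‖⁻¹
          ≤ 2 * ((1 + L) ^ 2 * (1 + L ^ 2)) * (M * r)⁻¹ * 1 :=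
            mul_le_mul (hfar hx1) (inv_le_one_of_one_le₀ (one_le_norm_bFun x)) (by positivity)
              (by positivity)
        _ ≤ 4 * (1 + L) ^ 2 * (1 + L ^ 2) * (M * r)⁻¹ * 1 := by nlinarith
    · simp [indicator_of_notMem hx1]

lemma integral_sub_piB_mul_bFun_eq_zero (ha : IsAtomOn (bFun A') a x0 r)
    (hA : LipschitzWith L A) (hA' : ∀ x, |A' x| ≤ L) (hr : 0 < r) (hM : 2 < M)
    (hCt : IsPVOp (relKer A) Ct)
    (hrel : ∀ f : ℝ → ℂ, CΓ f =ᵐ[volume] Ct (fun y => bFun A' y * f y))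
    (hadj : ∀ g : ℝ → ℂ, CΓstar g =ᵐ[volume] fun x => -(bFun A' x) * Ct g x) :
    ∫ x, (a x - PiB (bFun A') CΓ CΓstar ((ball (x0 + M * r) r).indicator fun _ => 1)
        (fun x => -a x / κ) x) * bFun A' x = 0 := by
  have hd : 0 < (M - 2) * r := mul_pos (by linarith) hr
  have hW0 : ∀ y ∉ ball x0 r, bFun A' y * (-a y / κ) = 0 := fun y hy => by
    simp [ha.eq_zero_of_notMem y hy]
  have hkey := ae_piB_mul_bFun_eq (s := ball x0 r) (t := ball (x0 + M * r) r)
    (h := fun y => -a y / κ) hCt hrel hadj measurableSet_ball measurableSet_ball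
    measure_ball_lt_top.ne hd (fun x hx y hy => le_abs_sub_of_mem_ball hx hy)
    (fun y hy => by simp [ha.eq_zero_of_notMem y hy])
    (ha.memLp_mul_neg_div (norm_bFun_le hA') le_rfl)
  obtain ⟨hint, hzero⟩ := integral_indicator_add_mul_eq_zero (s := ball x0 r)
    (t := ball (x0 + M * r) r) hA.continuous measurableSet_ball measurableSet_ball
    measure_ball_lt_top.ne hd
    (fun x hx y hy => by rw [abs_sub_comm]; exact le_abs_sub_of_mem_ball hy hx)
    (W := fun y => bFun A' y * (-a y / κ)) ha.integrable_mul_neg_div.integrableOn hW0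
  simp_rw [sub_mul]
  rw [integral_sub ha.integrable_mul (hint.congr (hkey.mono fun x hx => hx.symm)),
    ha.integral_mul_eq_zero, integral_congr_ae hkey, hzero, sub_zero]

end IsAtomOn

end Atom

lemma inv_two_mul_mul_mul_sqrt_le {r K : ℝ} (hr : 0 < r) (hK : 0 ≤ K) :
    (2 * r)⁻¹ * K * √(2 * r) ≤ K / √r := by
  have h2r : 0 < √(2 * r) := Real.sqrt_pos.2 (by positivity)
  calc (2 * r)⁻¹ * K * √(2 * r) = K / √(2 * r) := by
        rw [eq_div_iff h2r.ne', mul_assoc, Real.mul_self_sqrt (by positivity)]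
        field_simp
    _ ≤ K / √r := by gcongr; linarith

theorem atom_pointwise_approximation_general
    (A A' : ℝ → ℝ) (L : ℝ≥0) (hA : LipschitzWith L A)
    (hA'bd : ∀ x, |A' x| ≤ (L : ℝ))
    (CΓ CΓstar Ct : (ℝ → ℂ) → ℝ → ℂ)
    (hCt : IsPVOp (relKer A) Ct)
    (hrel : ∀ f : ℝ → ℂ, CΓ f =ᵐ[volume] Ct (fun y => bFun A' y * f y))
    (hadj : ∀ g : ℝ → ℂ, CΓstar g =ᵐ[volume] fun x => -(bFun A' x) * Ct g x) :
    ∃ C : ℝ, 0 < C ∧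
      ∀ (a : ℝ → ℂ) (x0 r M : ℝ), 0 < r → 100 ≤ M →
        (∀ x, x ∉ Metric.ball x0 r → a x = 0) →
        (∀ x, ‖a x‖ ≤ (2 * r)⁻¹) →
        Integrable (fun x => a x * bFun A' x) volume →
        (∫ x, a x * bFun A' x) = 0 →
        ∀ y0 : ℝ, y0 = x0 + M * r →
        ∀ κ : ℂ, κ = -(((Real.pi : ℂ) * Complex.I)⁻¹ *
            ∫ y in Metric.ball y0 r,
              1 / ((y : ℂ) - (x0 : ℂ) + Complex.I * ((A y : ℂ) - (A x0 : ℂ)))) →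
        ∀ g h : ℝ → ℂ,
          g = (Metric.ball y0 r).indicator (fun _ => (1 : ℂ)) →
          h = (fun x => -(a x) / κ) →
          (∀ᵐ x ∂volume, ‖a x - PiB (bFun A') CΓ CΓstar g h x‖ ≤
              C * (M * r)⁻¹ * ((Metric.ball x0 r).indicator (fun _ => (1:ℝ)) x +
                (Metric.ball y0 r).indicator (fun _ => (1:ℝ)) x)) ∧
          (∫ x, (a x - PiB (bFun A') CΓ CΓstar g h x) * bFun A' x) = 0 ∧
          ENNReal.ofReal (C⁻¹ * Real.sqrt r) ≤ eLpNorm g 2 volume ∧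
          eLpNorm g 2 volume ≤ ENNReal.ofReal (C * Real.sqrt r) ∧
          eLpNorm h 2 volume ≤ ENNReal.ofReal (C * M / Real.sqrt r) := by
  refine ⟨4 * (1 + L) ^ 2 * (1 + L ^ 2), by positivity, ?_⟩
  rintro a x0 r M hr hM hsupp hbd hint hzero y0 rfl κ hκ g h rfl rfl
  have ha : IsAtomOn (bFun A') a x0 r := ⟨hsupp, hbd, hint, hzero⟩
  have hκ' : κ = -∫ y in ball (x0 + M * r) r, relKer A x0 y := by
    rw [hκ, ← integral_const_mul]; rfl
  have hκinv : ‖κ‖⁻¹ ≤ Real.pi * (1 + L ^ 2) * M := by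
    rw [hκ', norm_neg]; exact (inv_norm_setIntegral_relKer_ball_le hA hr (by linarith)).2
  have hC : Real.pi ≤ 4 * (1 + L) ^ 2 := by nlinarith [Real.pi_lt_four, L.coe_nonneg]
  have hC2 : 2 ≤ 4 * (1 + (L : ℝ)) ^ 2 * (1 + L ^ 2) := by nlinarith [L.coe_nonneg]
  have hg := eLpNorm_indicator_const_ball (x0 + M * r) hr.le (1 : ℂ)
  rw [norm_one, one_mul, Real.sqrt_mul zero_le_two] at hg
  have hsqrt2 : 1 ≤ √2 ∧ √2 ≤ 2 := ⟨Real.one_le_sqrt.2 one_le_two, by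
    rw [Real.sqrt_le_left zero_le_two]; norm_num⟩
  refine ⟨ha.ae_norm_sub_piB_le hA hA'bd hr (by linarith) hκ' hCt hrel hadj,
    ha.integral_sub_piB_mul_bFun_eq_zero hA hA'bd hr (by linarith) hCt hrel hadj, ?_, ?_, ?_⟩
  · rw [hg]
    refine ENNReal.ofReal_le_ofReal (mul_le_mul_of_nonneg_right ?_ (Real.sqrt_nonneg r))
    exact (inv_le_one_of_one_le₀ (by linarith)).trans hsqrt2.1
  · rw [hg]
    exact ENNReal.ofReal_le_ofReal (mul_le_mul_of_nonneg_right (by linarith) (Real.sqrt_nonneg r))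
  · refine (ha.eLpNorm_neg_div_le hr.le hκinv).trans (ENNReal.ofReal_le_ofReal ?_)
    refine (inv_two_mul_mul_mul_sqrt_le hr (by positivity)).trans ?_
    gcongr

/-- **Pointwise approximation estimate** (estimates (4.4)–(4.6)): let `a` be an
`H¹_b(ℝ)` `L^∞`-atom supported in `I(x0,r)`, `M ≥ 100`, `y0 = x0 + M r`,
`g = χ_{I(y0,r)}` and `h = −a / ((C̃_Γ)*(g)(x0))`, where
`(C̃_Γ)*(g)(x0) = −C̃_Γ(g)(x0) = −(1/(πi)) ∫_{I(y0,r)} dy/(y − x0 + i(A(y) − A(x0)))` is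
given by an absolutely convergent integral (no principal value needed, `x0 ∉ I(y0,r)`).
Then a.e. `|a − Π_b(g,h)| ≤ C (Mr)⁻¹ (χ_{I(x0,r)} + χ_{I(y0,r)})`,
`∫ (a − Π_b(g,h)) b = 0`, `‖g‖₂ ≈ r^{1/2}` and `‖h‖₂ ≤ C M r^{-1/2}`, with `C`
depending only on `‖A'‖_∞`. (Here `C_Γ(f) = C̃_Γ(b f)` and `C_Γ* = −b • C̃_Γ`.) -/
theorem atom_pointwise_approximation
    (A A' : ℝ → ℝ) (L : ℝ≥0) (hA : LipschitzWith L A)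
    (hA' : ∀ᵐ x ∂volume, HasDerivAt A (A' x) x)
    (hA'meas : Measurable A') (hA'bd : ∀ x, |A' x| ≤ (L : ℝ))
    (CΓ CΓstar Ct : (ℝ → ℂ) → ℝ → ℂ)
    (hCt : IsPVOp (relKer A) Ct)
    (hCt2 : ∃ C : ℝ, BddOnLp 2 Ct C)
    (hCΓ2 : ∃ C : ℝ, BddOnLp 2 CΓ C)
    (hCΓs2 : ∃ C : ℝ, BddOnLp 2 CΓstar C)
    (hrel : ∀ f : ℝ → ℂ, CΓ f =ᵐ[volume] Ct (fun y => bFun A' y * f y))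
    (hadj : ∀ g : ℝ → ℂ, CΓstar g =ᵐ[volume] fun x => -(bFun A' x) * Ct g x) :
    ∃ C : ℝ, 0 < C ∧
      ∀ (a : ℝ → ℂ) (x0 r M : ℝ), 0 < r → 100 ≤ M →
        (∀ x, x ∉ Metric.ball x0 r → a x = 0) →
        (∀ x, ‖a x‖ ≤ (2 * r)⁻¹) →
        Integrable (fun x => a x * bFun A' x) volume →
        (∫ x, a x * bFun A' x) = 0 →
        ∀ y0 : ℝ, y0 = x0 + M * r →
        ∀ κ : ℂ, κ = -(((Real.pi : ℂ) * Complex.I)⁻¹ *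
            ∫ y in Metric.ball y0 r,
              1 / ((y : ℂ) - (x0 : ℂ) + Complex.I * ((A y : ℂ) - (A x0 : ℂ)))) →
        ∀ g h : ℝ → ℂ,
          g = (Metric.ball y0 r).indicator (fun _ => (1 : ℂ)) →
          h = (fun x => -(a x) / κ) →
          (∀ᵐ x ∂volume, ‖a x - PiB (bFun A') CΓ CΓstar g h x‖ ≤
              C * (M * r)⁻¹ * ((Metric.ball x0 r).indicator (fun _ => (1:ℝ)) x +
                (Metric.ball y0 r).indicator (fun _ => (1:ℝ)) x)) ∧
          (∫ x, (a x - PiB (bFun A') CΓ CΓstar g h x) * bFun A' x) = 0 ∧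
          ENNReal.ofReal (C⁻¹ * Real.sqrt r) ≤ eLpNorm g 2 volume ∧
          eLpNorm g 2 volume ≤ ENNReal.ofReal (C * Real.sqrt r) ∧
          eLpNorm h 2 volume ≤ ENNReal.ofReal (C * M / Real.sqrt r) :=
  atom_pointwise_approximation_general A A' L hA hA'bd CΓ CΓstar Ct hCt hrel hadj
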